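/- Let f realize access structure A on {s}∪P with f({i})=f({s}) for all i ∈ P, and let a ∈ A' ⊆ A ⊆ P. If A∖{a} ∈ A, A' ∈ A, and A'∖{a} ∉ A, then f(A) = f(A∖{a}). -/

import Mathlib

/-!
Submodularity for `{s} ∪ (A ∖ {a})` and `{s} ∪ A'`, whose union is `{s} ∪ A` and whose
intersection is `{s} ∪ (A' ∖ {a})`, bounds `f ({s} ∪ A) - f ({s} ∪ (A ∖ {a}))` by
`f ({s} ∪ A') - f ({s} ∪ (A' ∖ {a}))`. By the realization conditions the latter equals
`f A' - f (A' ∖ {a}) - f {s}`, which is `≤ 0` since `f A' ≤ f (A' ∖ {a}) + f {a}` and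
`f {a} = f {s}`. As `A ∖ {a}` is qualified this gives `f ({s} ∪ A) ≤ f (A ∖ {a})`, and
monotonicity squeezes `f A` in between.
-/

/-- The polymatroid rank function `f` on ground set `{s} ∪ P` realizes the access
structure `𝒜 ⊆ 2^P`. -/
def Realizes {α : Type*} [DecidableEq α] (s : α) (P : Finset α) (𝒜 : Set (Finset α))
    (f : Finset α → ℝ) : Prop :=
  ∀ A : Finset α, A ⊆ P →
    (A ∈ 𝒜 ↔ f (insert s A) = f A) ∧ (A ∉ 𝒜 ↔ f (insert s A) = f A + f {s})

section

open Finset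

variable {α : Type*} [DecidableEq α]

def IsSubmodularOn (E : Finset α) (f : Finset α → ℝ) : Prop :=
  ∀ A B : Finset α, A ⊆ E → B ⊆ E → f (A ∪ B) + f (A ∩ B) ≤ f A + f B

namespace IsSubmodularOn

variable {E : Finset α} {f : Finset α → ℝ}

theorem le_erase_add_singleton (hf : IsSubmodularOn E f) (h0 : f ∅ = 0) {A : Finset α}
    (hA : A ⊆ E) {a : α} (ha : a ∈ A) : f A ≤ f (A.erase a) + f {a} := by
  have h := hf (A.erase a) {a} ((erase_subset a A).trans hA) (singleton_subset_iff.2 (hA ha))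
  rwa [erase_union_eq a A ha, erase_inter, inter_singleton_of_mem ha, erase_singleton, h0,
    add_zero] at h

theorem insert_erase_inter_insert_le (hf : IsSubmodularOn E f) (s : α) {A B : Finset α}
    (hA : insert s A ⊆ E) (hBA : B ⊆ A) {a : α} (ha : a ∈ B) :
    f (insert s A) + f (insert s (B.erase a)) ≤ f (insert s (A.erase a)) + f (insert s B) := by
  have h := hf (insert s (A.erase a)) (insert s B)
    ((insert_subset_insert s (erase_subset a A)).trans hA)
    ((insert_subset_insert s hBA).trans hA)
  rwa [← insert_union_distrib, ← insert_inter_distrib, erase_union_of_mem ha,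
    union_eq_left.2 hBA, erase_inter, inter_eq_right.2 hBA] at h

end IsSubmodularOn

theorem Realizes.rank_insert_le_erase {s : α} {P : Finset α} {𝒜 : Set (Finset α)}
    {f : Finset α → ℝ} (hreal : Realizes s P 𝒜 f) (hsub : IsSubmodularOn (insert s P) f)
    (h0 : f ∅ = 0) {A B : Finset α} (hA : A ⊆ P) (hBA : B ⊆ A) {a : α} (ha : a ∈ B)
    (hfa : f {a} = f {s}) (h1 : A.erase a ∈ 𝒜) (h2 : B ∈ 𝒜) (h3 : B.erase a ∉ 𝒜) :
    f (insert s A) ≤ f (A.erase a) := by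
  have hBP : B ⊆ P := hBA.trans hA
  have e1 := (hreal _ ((erase_subset a A).trans hA)).1.1 h1
  have e2 := (hreal _ hBP).1.1 h2
  have e3 := (hreal _ ((erase_subset a B).trans hBP)).2.1 h3
  have hB := hsub.le_erase_add_singleton h0 (hBP.trans (subset_insert s P)) ha
  have hsA := hsub.insert_erase_inter_insert_le s (insert_subset_insert s hA) hBA ha
  linarith

end

theorem rank_unchanged_general {α : Type*} [DecidableEq α] (s : α) (P : Finset α)
    (𝒜 : Set (Finset α)) (f : Finset α → ℝ)
    (hempty : f ∅ = 0)
    (hmono : ∀ A B : Finset α, A ⊆ B → B ⊆ insert s P → f A ≤ f B)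
    (hsub : ∀ A B : Finset α, A ⊆ insert s P → B ⊆ insert s P →
        f (A ∪ B) + f (A ∩ B) ≤ f A + f B)
    (hreal : Realizes s P 𝒜 f)
    (hideal : ∀ i ∈ P, f {i} = f {s})
    (A A' : Finset α) (hA : A ⊆ P) (hA' : A' ⊆ A) (a : α) (ha : a ∈ A')
    (h1 : A \ {a} ∈ 𝒜) (h2 : A' ∈ 𝒜) (h3 : A' \ {a} ∉ 𝒜) :
    f A = f (A \ {a}) := by
  rw [Finset.sdiff_singleton_eq_erase] at h1 h3 ⊢
  have hsA : insert s A ⊆ insert s P := Finset.insert_subset_insert s hA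
  have hle := hreal.rank_insert_le_erase hsub hempty hA hA' ha (hideal a (hA (hA' ha))) h1 h2 h3
  exact le_antisymm ((hmono A (insert s A) (Finset.subset_insert s A) hsA).trans hle)
    (hmono (A.erase a) A (Finset.erase_subset a A) ((Finset.subset_insert s A).trans hsA))

/-- Lemma 2: if `A ∖ {a}` and `A'` are qualified while `A' ∖ {a}` is not, then
removing `a` from `A` does not change the rank. -/
theorem rank_unchanged {α : Type*} [DecidableEq α] (s : α) (P : Finset α)
    (hs : s ∉ P) (𝒜 : Set (Finset α)) (f : Finset α → ℝ)
    (hempty : f ∅ = 0)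
    (hnonneg : ∀ A, A ⊆ insert s P → 0 ≤ f A)
    (hmono : ∀ A B : Finset α, A ⊆ B → B ⊆ insert s P → f A ≤ f B)
    (hsub : ∀ A B : Finset α, A ⊆ insert s P → B ⊆ insert s P →
        f (A ∪ B) + f (A ∩ B) ≤ f A + f B)
    (hreal : Realizes s P 𝒜 f)
    (hideal : ∀ i ∈ P, f {i} = f {s})
    (A A' : Finset α) (hA : A ⊆ P) (hA' : A' ⊆ A) (a : α) (ha : a ∈ A')
    (h1 : A \ {a} ∈ 𝒜) (h2 : A' ∈ 𝒜) (h3 : A' \ {a} ∉ 𝒜) :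
    f A = f (A \ {a}) :=
  rank_unchanged_general s P 𝒜 f hempty hmono hsub hreal hideal A A' hA hA' a ha h1 h2 h3
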